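/- The q-Weyl coefficients satisfy both affine coequivariance conditions: for every N ≥ 1, n ≥ 1 and Γ̃ = (Γ₁,…,Γ_n) ∈ (Y⁺_{≤N})ⁿ, the identity Σ_{Γ̃' ∈ (Y⁺_{≤N})ⁿ} Σ_{σ ∈ S_n} (A_{Γ₁,Γ'₁}⋯A_{Γ_n,Γ'_n}) ⊗ C_{Γ̃'}(σ)·ℏ_{Γ'_{σ(1)}}⋯ℏ_{Γ'_{σ(n)}} = Σ_{Γ̃' ∈ (Y⁺_{≤N})ⁿ} Σ_{σ ∈ S_n} C_{Γ̃}(σ)·(A_{Γ_{σ(1)},Γ'₁}⋯A_{Γ_{σ(n)},Γ'_n}) ⊗ ℏ_{Γ'₁}⋯ℏ_{Γ'_n} holds in 𝕄 ⊗_K E_{≤N}, and the identity Σ_{Γ̃' ∈ (Y⁺_{≤N})ⁿ} Σ_{σ ∈ S_n} C_{Γ̃'}(σ)·ℏ_{Γ'_{σ(1)}}⋯ℏ_{Γ'_{σ(n)}} ⊗ (A_{Γ'₁,Γ₁}⋯A_{Γ'_n,Γ_n}) = Σ_{Γ̃' ∈ (Y⁺_{≤N})ⁿ} Σ_{σ ∈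 S_n} C_{Γ̃}(σ)·ℏ_{Γ'₁}⋯ℏ_{Γ'_n} ⊗ (A_{Γ'₁,Γ_{σ(1)}}⋯A_{Γ'_n,Γ_{σ(n)}}) holds in E_{≤N} ⊗_K 𝕄. -/

import Mathlib

open scoped Classical

noncomputable section

namespace NC

/-- Number of leaves of a planar binary tree. -/
def leaves {α : Type*} : FreeMagma α → ℕ
  | .of _ => 1
  | .mul a b => leaves a + leaves b

/-- The list of leaf labels of a planar binary tree, read left to right. -/
def leafList {α : Type*} : FreeMagma α → List α
  | .of i => [i]
  | .mul a b => leafList a ++ leafList b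

/-- Planar binary trees with leaves labelled in `Fin (2*d)`. -/
abbrev M (d : ℕ) := FreeMagma (Fin (2 * d))

/-- The strict order `≺` on labelled planar binary trees. -/
def mlt {d : ℕ} : M d → M d → Prop
  | .of i, .of j => i < j
  | .of _, .mul _ _ => True
  | .mul _ _, .of _ => False
  | .mul a b, .mul c e =>
      leaves (FreeMagma.mul a b) < leaves (FreeMagma.mul c e) ∨
        (leaves (FreeMagma.mul a b) = leaves (FreeMagma.mul c e) ∧
          (mlt a c ∨ (a = c ∧ mlt b e)))

/-- `a ⪰ b`. -/
def mge {d : ℕ} (a b : M d) : Prop := mlt b a ∨ a = b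

/-- The set `Y⁺` of admissible trees. -/
inductive Yplus {d : ℕ} : M d → Prop
  | of (i : Fin (2 * d)) : Yplus (FreeMagma.of i)
  | mul {a b : M d} : Yplus a → Yplus b → mlt a b → Yplus (a * b)

abbrev Yp (d : ℕ) := {Γ : M d // Yplus Γ}

variable {d : ℕ} {K : Type*} [CommRing K]

/-- Extension of `q` to pairs of trees. -/
def qT (q : Fin (2 * d) → Fin (2 * d) → Kˣ) (Γ Γ' : M d) : Kˣ :=
  ((leafList Γ).map fun i => ((leafList Γ').map fun j => q i j).prod).prod

/-- Defining relations of the bracketing (epoché) algebra. -/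
inductive Erel (q : Fin (2 * d) → Fin (2 * d) → Kˣ) :
    FreeAlgebra K (M d) → FreeAlgebra K (M d) → Prop
  | rel (Γ Γ' : M d) :
      Erel q (FreeAlgebra.ι K Γ * FreeAlgebra.ι K Γ')
        (((qT q Γ' Γ : Kˣ) : K) • (FreeAlgebra.ι K Γ' * FreeAlgebra.ι K Γ)
          + FreeAlgebra.ι K (Γ * Γ'))

/-- The bracketing (epoché) algebra `E`. -/
abbrev E (q : Fin (2 * d) → Fin (2 * d) → Kˣ) := RingQuot (Erel (K := K) q)

/-- The noncommutative Planck constants `ℏ_Γ`. -/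
def hbar (q : Fin (2 * d) → Fin (2 * d) → Kˣ) (Γ : M d) : E q :=
  RingQuot.mkAlgHom K (Erel q) (FreeAlgebra.ι K Γ)

/-- Defining relations of the classical shadow. -/
inductive Arel (q : Fin (2 * d) → Fin (2 * d) → Kˣ) :
    FreeAlgebra K (Yp d) → FreeAlgebra K (Yp d) → Prop
  | rel (Γ Γ' : Yp d) :
      Arel q (FreeAlgebra.ι K Γ * FreeAlgebra.ι K Γ')
        (((qT q Γ'.1 Γ.1 : Kˣ) : K) • (FreeAlgebra.ι K Γ' * FreeAlgebra.ι K Γ))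

/-- The classical shadow `A`. -/
abbrev A (q : Fin (2 * d) → Fin (2 * d) → Kˣ) := RingQuot (Arel (K := K) q)

/-- The generators `h_Γ` of the classical shadow. -/
def hA (q : Fin (2 * d) → Fin (2 * d) → Kˣ) (Γ : Yp d) : A q :=
  RingQuot.mkAlgHom K (Arel q) (FreeAlgebra.ι K Γ)

/-- A weakly decreasing list of trees: `Γ₁ ⪰ Γ₂ ⪰ … ⪰ Γ_n`. -/
def DecChain {d : ℕ} (l : List (Yp d)) : Prop := l.Chain' fun a b => mge a.1 b.1

/-- Total degree of a list of trees. -/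
def degList {d : ℕ} (l : List (M d)) : ℕ := (l.map fun Γ => leaves Γ - 1).sum

/-- The decreasing filtration `F` on `E`. -/
def Ffil (q : Fin (2 * d) → Fin (2 * d) → Kˣ) (n : ℕ) : Submodule K (E q) :=
  Submodule.span K {x | ∃ l : List (M d), n ≤ degList l ∧ x = (l.map (hbar q)).prod}

/-- Homogeneous component of degree `D` of the classical shadow. -/
def Adeg (q : Fin (2 * d) → Fin (2 * d) → Kˣ) (D : ℕ) : Submodule K (A q) :=
  Submodule.span K {x | ∃ l : List (Yp d),
    DecChain l ∧ degList (l.map (·.1)) = D ∧ x = (l.map (hA q)).prod}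

/-- The braiding coefficient `q(Γ̃, σ)`. -/
def qPerm (q : Fin (2 * d) → Fin (2 * d) → Kˣ) {n : ℕ} (Γ : Fin n → M d)
    (σ : Equiv.Perm (Fin n)) : Kˣ :=
  ∏ p ∈ Finset.univ.filter
      (fun p : Fin n × Fin n => p.1 < p.2 ∧ σ.symm p.2 < σ.symm p.1),
    qT q (Γ p.1) (Γ p.2)

/-- The partition function `Z_n(Γ̃)`. -/
def Zfun (q : Fin (2 * d) → Fin (2 * d) → Kˣ) {n : ℕ} (Γ : Fin n → M d) : K :=
  ∑ σ : Equiv.Perm (Fin n), ((qPerm q Γ σ : Kˣ) : K) ^ 2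

/-- Defining relations of the quantum-matrix algebra `𝕄`. -/
inductive Mrel (q : Fin (2 * d) → Fin (2 * d) → Kˣ) :
    FreeAlgebra K (Yp d × Yp d) → FreeAlgebra K (Yp d × Yp d) → Prop
  | rel1 (Γ₁ Γ₂ Γ₁' Γ₂' : Yp d) :
      Mrel q
        (FreeAlgebra.ι K (Γ₂, Γ₁') * FreeAlgebra.ι K (Γ₁, Γ₂') +
          ((qT q Γ₁'.1 Γ₂'.1 : Kˣ) : K) •
            (FreeAlgebra.ι K (Γ₂, Γ₂') * FreeAlgebra.ι K (Γ₁, Γ₁')))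
        (((qT q Γ₁.1 Γ₂.1 : Kˣ) : K) •
          (FreeAlgebra.ι K (Γ₁, Γ₁') * FreeAlgebra.ι K (Γ₂, Γ₂') +
            ((qT q Γ₁'.1 Γ₂'.1 : Kˣ) : K) •
              (FreeAlgebra.ι K (Γ₁, Γ₂') * FreeAlgebra.ι K (Γ₂, Γ₁'))))
  | rel2 (Γ₁ Γ₂ Γ₁' Γ₂' : Yp d) :
      Mrel q
        (FreeAlgebra.ι K (Γ₁, Γ₂') * FreeAlgebra.ι K (Γ₂, Γ₁') +
          ((qT q Γ₁.1 Γ₂.1 : Kˣ) : K) •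
            (FreeAlgebra.ι K (Γ₂, Γ₂') * FreeAlgebra.ι K (Γ₁, Γ₁')))
        (((qT q Γ₁'.1 Γ₂'.1 : Kˣ) : K) •
          (FreeAlgebra.ι K (Γ₁, Γ₁') * FreeAlgebra.ι K (Γ₂, Γ₂') +
            ((qT q Γ₁.1 Γ₂.1 : Kˣ) : K) •
              (FreeAlgebra.ι K (Γ₂, Γ₁') * FreeAlgebra.ι K (Γ₁, Γ₂'))))

/-- The quantum-matrix algebra `𝕄`. -/
abbrev Mq (q : Fin (2 * d) → Fin (2 * d) → Kˣ) := RingQuot (Mrel (K := K) q)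

/-- The generators `A_{Γ,Γ'}` of `𝕄`. -/
def Amat (q : Fin (2 * d) → Fin (2 * d) → Kˣ) (Γ Γ' : Yp d) : Mq q :=
  RingQuot.mkAlgHom K (Mrel q) (FreeAlgebra.ι K (Γ, Γ'))

/-- `L_n(Γ̃,Γ̃') = Σ_{κ} q(Γ̃',κ)·A_{Γ₁,Γ'_{κ(1)}}⋯A_{Γ_n,Γ'_{κ(n)}}`. -/
def Lfun (q : Fin (2 * d) → Fin (2 * d) → Kˣ) {n : ℕ} (Γ Γ' : Fin n → Yp d) :
    Mq (K := K) q :=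
  ∑ κ : Equiv.Perm (Fin n),
    ((qPerm q (fun i => (Γ' i).1) κ : Kˣ) : K) •
      (List.ofFn fun i => Amat q (Γ i) (Γ' (κ i))).prod

/-- `R_n(Γ̃,Γ̃') = Σ_{κ} q(Γ̃,κ)·A_{Γ_{κ(1)},Γ'₁}⋯A_{Γ_{κ(n)},Γ'_n}`. -/
def Rfun (q : Fin (2 * d) → Fin (2 * d) → Kˣ) {n : ℕ} (Γ Γ' : Fin n → Yp d) :
    Mq (K := K) q :=
  ∑ κ : Equiv.Perm (Fin n),
    ((qPerm q (fun i => (Γ i).1) κ : Kˣ) : K) •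
      (List.ofFn fun i => Amat q (Γ (κ i)) (Γ' i)).prod
open scoped TensorProduct

/-- Relations for the truncation `E_{≤N}`: kill `ℏ_Γ` for `|Γ| > N`. -/
inductive ENrel (q : Fin (2 * d) → Fin (2 * d) → Kˣ) (N : ℕ) :
    E (K := K) q → E (K := K) q → Prop
  | rel (Γ : M d) : N < leaves Γ → ENrel q N (hbar q Γ) 0

/-- The truncation `E_{≤N}` of the bracketing algebra. -/
abbrev EN (q : Fin (2 * d) → Fin (2 * d) → Kˣ) (N : ℕ) :=
  RingQuot (ENrel (K := K) q N)

/-- The image of `ℏ_Γ` in the truncation `E_{≤N}`. -/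
def hbarN (q : Fin (2 * d) → Fin (2 * d) → Kˣ) (N : ℕ) (Γ : M d) : EN (K := K) q N :=
  RingQuot.mkAlgHom K (ENrel q N) (hbar q Γ)

/-- `Y⁺_{≤N}`: admissible trees with at most `N` leaves. -/
def YpN (d N : ℕ) := {Γ : M d // Yplus Γ ∧ leaves Γ ≤ N}

/-!
Let `L(Γ̃,Γ̃') = Σ_κ q(Γ̃',κ)·A_{Γ₁,Γ'_{κ(1)}}⋯A_{Γ_n,Γ'_{κ(n)}}` (`Lfun`). The transpose
`A_{Γ,Γ'} ↦ A_{Γ',Γ}` is well defined on `𝕄` because it swaps the two families of relations,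
and it maps `L(Γ̃',Γ̃)` to `R(Γ̃,Γ̃')` (`Rfun`). Grouping the terms `κ` and `κ ∘ (i i+1)` of
`L(Γ̃∘(i i+1),Γ̃')`, the first relation at positions `i, i+1` gives
`L(Γ̃∘τ,Γ̃') = q(Γ̃,τ)·L(Γ̃,Γ̃')` for adjacent transpositions `τ`, hence for all `τ` because
`q(Γ̃,·)` is a cocycle: `q(Γ̃∘κ,σ)·q(Γ̃,κ) = q(Γ̃,κσ)`. Transposing,
`R(Γ̃,Γ̃'∘τ) = q(Γ̃',τ)·R(Γ̃,Γ̃')`. Hence `Z(Γ̃')·R(Γ̃,Γ̃')` and `Z(Γ̃)·L(Γ̃,Γ̃')` both equal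
`Σ_{τ,κ} q(Γ̃,τ) q(Γ̃',κ)·A_{Γ_{τ(1)},Γ'_{κ(1)}}⋯A_{Γ_{τ(n)},Γ'_{κ(n)}}`, which is the exchange
rule `Σ_σ C_{Γ̃}(σ)·A_{Γ̃∘σ,Γ̃'} = Σ_σ C_{Γ̃'}(σ)·A_{Γ̃,Γ̃'∘σ}`. Both coequivariance identities
follow from it after substituting `Γ̃' ↦ Γ̃'∘σ` in the outer sum, as `C_{Γ̃'∘σ}(σ⁻¹) = C_{Γ̃'}(σ)`.
-/

lemma _root_.Finset.prod_eq_prod_filter_lt_mul_swap {ι M : Type*} [Fintype ι] [LinearOrder ι]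
    [CommMonoid M] (f : ι × ι → M) (hdiag : ∀ x, f (x, x) = 1) :
    ∏ p, f p = ∏ p with p.1 < p.2, f p * f p.swap := by
  rw [Finset.prod_mul_distrib, ← Finset.prod_filter_mul_prod_filter_not Finset.univ
    (fun p : ι × ι => p.1 < p.2)]
  congr 1
  calc ∏ p with ¬ p.1 < p.2, f p = ∏ p with p.2 < p.1, f p := by
        refine (Finset.prod_subset (fun p => by simpa using le_of_lt) fun p hp hp' => ?_).symm
        simp only [Finset.mem_filter, Finset.mem_univ, true_and, not_lt] at hp hp'
        rw [show p = (p.1, p.1) from Prod.ext rfl (le_antisymm hp' hp).symm, hdiag]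
    _ = ∏ p with p.1 < p.2, f p.swap :=
        Finset.prod_nbij' Prod.swap Prod.swap (by simp) (by simp) (by simp) (by simp) (by simp)

lemma _root_.Fin.swap_lt_swap_iff_of_adjacent {n : ℕ} {i j a b : Fin n} (hij : (i : ℕ) + 1 = j)
    (hab : a < b) :
    Equiv.swap i j b < Equiv.swap i j a ↔ a = i ∧ b = j := by
  rw [Fin.lt_def] at hab
  rw [Equiv.swap_apply_def, Equiv.swap_apply_def]
  split_ifs <;> simp only [Fin.ext_iff, Fin.lt_def] at * <;> omega

lemma _root_.Equiv.Perm.induction_on_adjacent_swap {n : ℕ} {P : Equiv.Perm (Fin n) → Prop}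
    (one : P 1) (mul : ∀ σ τ, P σ → P τ → P (σ * τ))
    (swap : ∀ i j : Fin n, (i : ℕ) + 1 = j → P (Equiv.swap i j)) (σ : Equiv.Perm (Fin n)) :
    P σ := by
  cases n with
  | zero => exact Subsingleton.elim 1 σ ▸ one
  | succ m =>
    have hσ : σ ∈ Submonoid.closure (Set.range fun i : Fin m => Equiv.swap i.castSucc i.succ) := by
      rw [Equiv.Perm.mclosure_swap_castSucc_succ]; trivial
    induction hσ using Submonoid.closure_induction with
    | mem _ h => obtain ⟨i, rfl⟩ := h; exact swap _ _ rfl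
    | one => exact one
    | mul _ _ _ _ hσ hτ => exact mul _ _ hσ hτ

lemma _root_.Finset.sum_eq_smul_sum_of_involutive {α R V : Type*} [Fintype α] [AddCommMonoid V]
    [Monoid R] [DistribMulAction R V] {e : α → α} (he : Function.Involutive e) (p : α → Prop)
    [DecidablePred p] (hp : ∀ a, p (e a) ↔ ¬ p a) (c : R) {X Y : α → V}
    (h : ∀ a, X a + X (e a) = c • (Y a + Y (e a))) :
    ∑ a, X a = c • ∑ a, Y a := by
  have half : ∀ Z : α → V, ∑ a, Z a = ∑ a with p a, (Z a + Z (e a)) := fun Z => by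
    rw [Finset.sum_add_distrib, ← Finset.sum_filter_add_sum_filter_not Finset.univ p]
    congr 1
    exact Finset.sum_nbij' e e (by simp [hp]) (by simp [hp]) (fun a _ => he a) (fun a _ => he a)
      (fun a _ => by rw [he])
  rw [half X, half Y, Finset.smul_sum]
  exact Finset.sum_congr rfl fun a _ => h a

lemma _root_.List.exists_prod_ofFn_eq_mul_mul {R : Type*} [Monoid R] {n : ℕ} (f : Fin n → R)
    {i j : Fin n} (hij : (i : ℕ) + 1 = j) :
    ∃ P S : R, ∀ g : Fin n → R, (∀ k, k ≠ i → k ≠ j → g k = f k) →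
      (List.ofFn g).prod = P * (g i * g j) * S := by
  refine ⟨((List.ofFn f).take i).prod, ((List.ofFn f).drop (j + 1)).prod, fun g hg => ?_⟩
  have hlt : ∀ k : Fin n, (k : ℕ) < i ∨ (j : ℕ) < k → g k = f k := fun k hk =>
    hg k (Fin.ne_of_val_ne (by omega)) (Fin.ne_of_val_ne (by omega))
  have htake : (List.ofFn g).take i = (List.ofFn f).take i :=
    List.ext_getElem (by simp) fun k h₁ _ => by
      simp only [List.length_take, List.length_ofFn, lt_min_iff] at h₁
      simpa using hlt ⟨k, h₁.2⟩ (Or.inl h₁.1)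
  have hdrop : (List.ofFn g).drop (j + 1) = (List.ofFn f).drop (j + 1) :=
    List.ext_getElem (by simp) fun k h₁ _ => by
      simp only [List.length_drop, List.length_ofFn] at h₁
      simpa using hlt ⟨j + 1 + k, by omega⟩ (Or.inr (by simp only; omega))
  rw [← htake, ← hdrop, ← List.prod_take_mul_prod_drop (List.ofFn g) i,
    List.drop_eq_getElem_cons (by simp), hij, List.drop_eq_getElem_cons (by simp)]
  simp [mul_assoc]

lemma _root_.Fintype.sum_sum_comp_perm {F T : Type*} [Fintype F] [AddCommMonoid T] {n : ℕ}
    (H : (Fin n → F) → Equiv.Perm (Fin n) → T) :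
    ∑ Γ, ∑ σ, H Γ σ = ∑ Δ : Fin n → F, ∑ σ : Equiv.Perm (Fin n), H (fun k => Δ (σ k)) σ⁻¹ := by
  rw [Finset.sum_comm]
  conv_rhs => rw [Finset.sum_comm, ← Equiv.sum_comp (Equiv.inv _)]
  refine Finset.sum_congr rfl fun σ _ => ?_
  exact (Equiv.sum_comp (σ.arrowCongr (Equiv.refl F)) (H · σ)).symm

lemma one_le_leaves {α : Type*} (Γ : FreeMagma α) : 1 ≤ leaves Γ := by
  induction Γ <;> simp only [leaves] <;> omega

lemma finite_setOf_leaves_le {α : Type*} [Finite α] (N : ℕ) :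
    {Γ : FreeMagma α | leaves Γ ≤ N}.Finite := by
  induction N with
  | zero =>
    refine Set.finite_empty.subset fun Γ (hΓ : leaves Γ ≤ 0) => ?_
    have := one_le_leaves Γ
    omega
  | succ N ih =>
    refine ((Set.finite_range FreeMagma.of).union (ih.image2 (· * ·) ih)).subset ?_
    rintro (i | ⟨a, b⟩) hΓ
    · exact Or.inl ⟨i, rfl⟩
    · have ha := one_le_leaves a
      have hb := one_le_leaves b
      have hΓ' : leaves a + leaves b ≤ N + 1 := hΓ
      exact Or.inr ⟨a, (by omega : leaves a ≤ N), b, (by omega : leaves b ≤ N), rfl⟩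

instance (d N : ℕ) : Finite (YpN d N) :=
  have := (finite_setOf_leaves_le (α := Fin (2 * d)) N).to_subtype
  Finite.of_injective (fun Γ : YpN d N => (⟨Γ.1, Γ.2.2⟩ : {Γ : M d | leaves Γ ≤ N}))
    fun _ _ h => Subtype.ext (congrArg Subtype.val h :)

def YpN.toYp {d N : ℕ} (Γ : YpN d N) : Yp d := ⟨Γ.1, Γ.2.1⟩

section Braiding

variable (q : Fin (2 * d) → Fin (2 * d) → Kˣ)

lemma qT_mul_qT_swap (hq2 : ∀ i j, q i j * q j i = 1) (a b : M d) :
    qT q a b * qT q b a = 1 := by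
  have hswap :
      qT q b a = ((leafList a).map fun i => ((leafList b).map fun j => q j i).prod).prod := by
    simpa only [qT, Multiset.prod_coe, Multiset.map_coe] using
      Multiset.prod_map_prod_map (leafList b : Multiset _) (leafList a : Multiset _)
        (f := fun j i => q j i)
  rw [hswap, qT, ← List.prod_map_mul]
  refine List.prod_eq_one fun x hx => ?_
  obtain ⟨i, -, rfl⟩ := List.mem_map.1 hx
  rw [← List.prod_map_mul]
  exact List.prod_eq_one fun y hy => by
    obtain ⟨j, -, rfl⟩ := List.mem_map.1 hy
    exact hq2 i j

-- Allowing an arbitrary reference order `α` (`qPerm Γ σ = inversionWeight Γ 1 σ⁻¹`) turns the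
-- cocycle law of `qPerm` into a check on each pair `{a, b}`.
def inversionWeight {n : ℕ} (Γ : Fin n → M d) (α β : Equiv.Perm (Fin n)) : Kˣ :=
  ∏ p : Fin n × Fin n, if α p.1 < α p.2 ∧ β p.2 < β p.1 then qT q (Γ p.1) (Γ p.2) else 1

lemma inversionWeight_mul_inversionWeight (hq2 : ∀ i j, q i j * q j i = 1) {n : ℕ}
    (Γ : Fin n → M d) (α β γ : Equiv.Perm (Fin n)) :
    inversionWeight q Γ α β * inversionWeight q Γ β γ = inversionWeight q Γ α γ := by
  simp only [inversionWeight]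
  rw [← Finset.prod_mul_distrib, Finset.prod_eq_prod_filter_lt_mul_swap _ (by simp),
    Finset.prod_eq_prod_filter_lt_mul_swap _ (by simp)]
  refine Finset.prod_congr rfl fun p hp => ?_
  have hne : p.1 ≠ p.2 := (Finset.mem_filter.1 hp).2.ne
  have hanti := qT_mul_qT_swap q hq2 (Γ p.1) (Γ p.2)
  rcases (α.injective.ne hne).lt_or_gt with ha | ha <;>
  rcases (β.injective.ne hne).lt_or_gt with hb | hb <;>
  rcases (γ.injective.ne hne).lt_or_gt with hc | hc <;>
  simp [ha, hb, hc, ha.not_gt, hb.not_gt, hc.not_gt, hanti, mul_comm (qT q (Γ p.2) _)]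

lemma inversionWeight_comp {n : ℕ} (Γ : Fin n → M d) (κ α β : Equiv.Perm (Fin n)) :
    inversionWeight q (fun i => Γ (κ i)) α β = inversionWeight q Γ (α * κ⁻¹) (β * κ⁻¹) := by
  refine Fintype.prod_equiv (κ.prodCongr κ) _ _ fun p => ?_
  simp [Equiv.Perm.mul_apply]

lemma qPerm_eq_inversionWeight {n : ℕ} (Γ : Fin n → M d) (σ : Equiv.Perm (Fin n)) :
    qPerm q Γ σ = inversionWeight q Γ 1 σ⁻¹ := by
  rw [qPerm, inversionWeight, Finset.prod_filter]
  rfl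

lemma qPerm_one {n : ℕ} (Γ : Fin n → M d) : qPerm q Γ 1 = 1 := by
  rw [qPerm_eq_inversionWeight, inversionWeight]
  exact Finset.prod_eq_one fun p _ => if_neg fun h => lt_asymm h.1 h.2

lemma qPerm_comp_mul (hq2 : ∀ i j, q i j * q j i = 1) {n : ℕ} (Γ : Fin n → M d)
    (κ σ : Equiv.Perm (Fin n)) :
    qPerm q (fun i => Γ (κ i)) σ * qPerm q Γ κ = qPerm q Γ (κ * σ) := by
  rw [qPerm_eq_inversionWeight, qPerm_eq_inversionWeight, qPerm_eq_inversionWeight,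
    inversionWeight_comp, mul_comm, one_mul, ← mul_inv_rev]
  exact inversionWeight_mul_inversionWeight q hq2 Γ 1 κ⁻¹ (κ * σ)⁻¹

lemma qPerm_swap {n : ℕ} (Γ : Fin n → M d) {i j : Fin n} (hij : (i : ℕ) + 1 = j) :
    qPerm q Γ (Equiv.swap i j) = qT q (Γ i) (Γ j) := by
  have hij' : i < j := Fin.lt_def.2 (by omega)
  have hinv : ∀ p : Fin n × Fin n, (p.1 < p.2 ∧ (Equiv.swap i j).symm p.2 <
      (Equiv.swap i j).symm p.1) ↔ p = (i, j) := by
    rintro ⟨a, b⟩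
    rw [Equiv.symm_swap, Prod.mk.injEq]
    refine ⟨fun h => (Fin.swap_lt_swap_iff_of_adjacent hij h.1).1 h.2, ?_⟩
    rintro ⟨rfl, rfl⟩
    exact ⟨hij', (Fin.swap_lt_swap_iff_of_adjacent hij hij').2 ⟨rfl, rfl⟩⟩
  rw [qPerm, Finset.filter_congr fun p _ => hinv p, Finset.filter_eq', if_pos (Finset.mem_univ _),
    Finset.prod_singleton]

lemma Zfun_eq_qPerm_sq_mul (hq2 : ∀ i j, q i j * q j i = 1)
    {n : ℕ} (Γ : Fin n → M d) (κ : Equiv.Perm (Fin n)) :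
    Zfun q Γ = ((qPerm q Γ κ : Kˣ) : K) ^ 2 * Zfun q (fun k => Γ (κ k)) := by
  rw [Zfun, Zfun, Finset.mul_sum, ← Equiv.sum_comp (Equiv.mulLeft κ)]
  refine Finset.sum_congr rfl fun σ _ => ?_
  rw [Equiv.coe_mulLeft, ← qPerm_comp_mul q hq2, Units.val_mul]
  ring

end Braiding

section QuantumMatrix

variable (q : Fin (2 * d) → Fin (2 * d) → Kˣ)

lemma Amat_rel1 (Γ₁ Γ₂ Γ₁' Γ₂' : Yp d) :
    Amat (K := K) q Γ₂ Γ₁' * Amat q Γ₁ Γ₂'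
        + ((qT q Γ₁'.1 Γ₂'.1 : Kˣ) : K) • (Amat q Γ₂ Γ₂' * Amat q Γ₁ Γ₁')
      = ((qT q Γ₁.1 Γ₂.1 : Kˣ) : K) • (Amat q Γ₁ Γ₁' * Amat q Γ₂ Γ₂'
          + ((qT q Γ₁'.1 Γ₂'.1 : Kˣ) : K) • (Amat q Γ₁ Γ₂' * Amat q Γ₂ Γ₁')) := by
  simpa only [map_add, map_mul, map_smul, Amat] using
    RingQuot.mkAlgHom_rel K (Mrel.rel1 (q := q) Γ₁ Γ₂ Γ₁' Γ₂')

lemma Amat_rel2 (Γ₁ Γ₂ Γ₁' Γ₂' : Yp d) :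
    Amat (K := K) q Γ₁ Γ₂' * Amat q Γ₂ Γ₁'
        + ((qT q Γ₁.1 Γ₂.1 : Kˣ) : K) • (Amat q Γ₂ Γ₂' * Amat q Γ₁ Γ₁')
      = ((qT q Γ₁'.1 Γ₂'.1 : Kˣ) : K) • (Amat q Γ₁ Γ₁' * Amat q Γ₂ Γ₂'
          + ((qT q Γ₁.1 Γ₂.1 : Kˣ) : K) • (Amat q Γ₂ Γ₁' * Amat q Γ₁ Γ₂')) := by
  simpa only [map_add, map_mul, map_smul, Amat] using
    RingQuot.mkAlgHom_rel K (Mrel.rel2 (q := q) Γ₁ Γ₂ Γ₁' Γ₂')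

def Mq.transpose : Mq (K := K) q →ₐ[K] Mq (K := K) q :=
  RingQuot.liftAlgHom K ⟨FreeAlgebra.lift K fun p => Amat q p.2 p.1, fun a b h => by
    cases h with
    | rel1 Γ₁ Γ₂ Γ₁' Γ₂' =>
      simpa only [map_add, map_mul, map_smul, FreeAlgebra.lift_ι_apply] using
        Amat_rel2 q Γ₁' Γ₂' Γ₁ Γ₂
    | rel2 Γ₁ Γ₂ Γ₁' Γ₂' =>
      simpa only [map_add, map_mul, map_smul, FreeAlgebra.lift_ι_apply] using
        Amat_rel1 q Γ₁' Γ₂' Γ₁ Γ₂⟩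

lemma Mq.transpose_Amat (Γ Γ' : Yp d) : Mq.transpose q (Amat (K := K) q Γ Γ') = Amat q Γ' Γ := by
  simp [Mq.transpose, Amat]

def Amonomial {n : ℕ} (Γ Γ' : Fin n → Yp d) : Mq (K := K) q :=
  (List.ofFn fun i => Amat q (Γ i) (Γ' i)).prod

lemma Mq.transpose_Amonomial {n : ℕ} (Γ Γ' : Fin n → Yp d) :
    Mq.transpose q (Amonomial (K := K) q Γ Γ') = Amonomial q Γ' Γ := by
  simp [Amonomial, map_list_prod, List.map_ofFn, Function.comp_def, Mq.transpose_Amat]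

lemma Amonomial_swap {n : ℕ} (Γ Γ' : Fin n → Yp d) {i j : Fin n} (hij : (i : ℕ) + 1 = j) :
    Amonomial (K := K) q (fun k => Γ (Equiv.swap i j k)) Γ'
        + ((qT q (Γ' i).1 (Γ' j).1 : Kˣ) : K) •
          Amonomial q (fun k => Γ (Equiv.swap i j k)) (fun k => Γ' (Equiv.swap i j k))
      = ((qT q (Γ i).1 (Γ j).1 : Kˣ) : K) • (Amonomial q Γ Γ'
          + ((qT q (Γ' i).1 (Γ' j).1 : Kˣ) : K) •
            Amonomial q Γ (fun k => Γ' (Equiv.swap i j k))) := by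
  obtain ⟨P, S, hPS⟩ := List.exists_prod_ofFn_eq_mul_mul (fun k => Amat (K := K) q (Γ k) (Γ' k)) hij
  simp only [Amonomial]
  rw [hPS, hPS, hPS, hPS]
  · simpa only [mul_add, add_mul, mul_smul_comm, smul_mul_assoc, Equiv.swap_apply_left,
      Equiv.swap_apply_right] using
      congrArg (fun x => P * x * S) (Amat_rel1 q (Γ i) (Γ j) (Γ' i) (Γ' j))
  all_goals exact fun k hki hkj => by simp only [Equiv.swap_apply_of_ne_of_ne hki hkj]

lemma Lfun_comp_swap (hq2 : ∀ i j, q i j * q j i = 1) {n : ℕ} (Γ Γ' : Fin n → Yp d) {i j : Fin n}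
    (hij : (i : ℕ) + 1 = j) :
    Lfun (K := K) q (fun k => Γ (Equiv.swap i j k)) Γ'
      = ((qT q (Γ i).1 (Γ j).1 : Kˣ) : K) • Lfun q Γ Γ' := by
  have hij' : i ≠ j := Fin.ne_of_val_ne (by omega)
  refine Finset.sum_eq_smul_sum_of_involutive (e := (· * Equiv.swap i j))
    (fun κ => Equiv.mul_swap_mul_self i j κ) (fun κ => κ i < κ j) (fun κ => ?_) _ fun κ => ?_
  · simp only [Equiv.Perm.mul_apply, Equiv.swap_apply_left, Equiv.swap_apply_right, not_lt]
    exact ⟨le_of_lt, fun h => h.lt_of_ne (κ.injective.ne hij'.symm)⟩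
  · have hweight : ((qPerm q (fun k => (Γ' k).1) (κ * Equiv.swap i j) : Kˣ) : K)
        = ((qT q (Γ' (κ i)).1 (Γ' (κ j)).1 : Kˣ) : K) * (qPerm q (fun k => (Γ' k).1) κ : K) := by
      rw [← qPerm_comp_mul q hq2, qPerm_swap q _ hij, Units.val_mul]
    rw [hweight, mul_comm]
    simp only [mul_smul, ← smul_add]
    rw [smul_comm]
    exact congrArg _ (Amonomial_swap q Γ (fun k => Γ' (κ k)) hij)

lemma Lfun_comp_perm (hq2 : ∀ i j, q i j * q j i = 1) {n : ℕ} (Γ Γ' : Fin n → Yp d)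
    (τ : Equiv.Perm (Fin n)) :
    Lfun (K := K) q (fun k => Γ (τ k)) Γ'
      = ((qPerm q (fun k => (Γ k).1) τ : Kˣ) : K) • Lfun q Γ Γ' := by
  induction τ using Equiv.Perm.induction_on_adjacent_swap generalizing Γ with
  | one => simp [qPerm_one]
  | mul σ τ hσ hτ =>
    rw [← qPerm_comp_mul q hq2, Units.val_mul, mul_smul, ← hσ]
    exact hτ fun k => Γ (σ k)
  | swap i j hij => rw [qPerm_swap q _ hij, Lfun_comp_swap q hq2 Γ Γ' hij]

lemma Rfun_eq_transpose_Lfun {n : ℕ} (Γ Γ' : Fin n → Yp d) :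
    Rfun (K := K) q Γ Γ' = Mq.transpose q (Lfun q Γ' Γ) := by
  simp only [Rfun, Lfun, map_sum, map_smul]
  exact Finset.sum_congr rfl fun κ _ => congrArg _ (Mq.transpose_Amonomial q Γ' _).symm

lemma Rfun_comp_perm (hq2 : ∀ i j, q i j * q j i = 1) {n : ℕ} (Γ Γ' : Fin n → Yp d)
    (τ : Equiv.Perm (Fin n)) :
    Rfun (K := K) q Γ (fun k => Γ' (τ k))
      = ((qPerm q (fun k => (Γ' k).1) τ : Kˣ) : K) • Rfun q Γ Γ' := by
  rw [Rfun_eq_transpose_Lfun, Rfun_eq_transpose_Lfun, Lfun_comp_perm q hq2, map_smul]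

lemma Zfun_smul_Rfun (hq2 : ∀ i j, q i j * q j i = 1) {n : ℕ} (Γ Γ' : Fin n → Yp d) :
    Zfun q (fun k => (Γ' k).1) • Rfun (K := K) q Γ Γ'
      = Zfun q (fun k => (Γ k).1) • Lfun q Γ Γ' := by
  set w : Equiv.Perm (Fin n) → K := fun τ => qPerm q (fun k => (Γ k).1) τ
  set w' : Equiv.Perm (Fin n) → K := fun κ => qPerm q (fun k => (Γ' k).1) κ
  have hR : Zfun q (fun k => (Γ' k).1) • Rfun (K := K) q Γ Γ'
      = ∑ κ, ∑ τ, (w τ * w' κ) • Amonomial q (fun k => Γ (τ k)) (fun k => Γ' (κ k)) := by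
    rw [Zfun, Finset.sum_smul]
    refine Finset.sum_congr rfl fun κ _ => ?_
    rw [sq, mul_smul, ← Rfun_comp_perm q hq2, Rfun, Finset.smul_sum]
    exact Finset.sum_congr rfl fun τ _ => by rw [smul_smul, mul_comm]; rfl
  have hL : Zfun q (fun k => (Γ k).1) • Lfun (K := K) q Γ Γ'
      = ∑ τ, ∑ κ, (w τ * w' κ) • Amonomial q (fun k => Γ (τ k)) (fun k => Γ' (κ k)) := by
    rw [Zfun, Finset.sum_smul]
    refine Finset.sum_congr rfl fun τ _ => ?_
    rw [sq, mul_smul, ← Lfun_comp_perm q hq2, Lfun, Finset.smul_sum]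
    exact Finset.sum_congr rfl fun κ _ => by rw [smul_smul]; rfl
  rw [hR, hL, Finset.sum_comm]

end QuantumMatrix

section WeylCoefficients

variable {𝕜 : Type*} [Field 𝕜] (q : Fin (2 * d) → Fin (2 * d) → 𝕜ˣ)

def weylCoeff {n : ℕ} (Γ : Fin n → M d) (σ : Equiv.Perm (Fin n)) : 𝕜 :=
  ((qPerm q Γ σ : 𝕜ˣ) : 𝕜) / Zfun q Γ

lemma weylCoeff_comp_inv (hq2 : ∀ i j, q i j * q j i = 1) {n : ℕ} (Γ : Fin n → M d)
    (κ : Equiv.Perm (Fin n)) :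
    weylCoeff q (fun k => Γ (κ k)) κ⁻¹ = weylCoeff q Γ κ := by
  have hinv : qPerm q (fun k => Γ (κ k)) κ⁻¹ = (qPerm q Γ κ)⁻¹ :=
    eq_inv_of_mul_eq_one_left (by rw [qPerm_comp_mul q hq2, mul_inv_cancel, qPerm_one])
  rw [weylCoeff, weylCoeff, hinv, Zfun_eq_qPerm_sq_mul q hq2 Γ κ, div_mul_eq_div_div,
    Units.val_inv_eq_inv_val, sq, div_mul_cancel_right₀ (Units.ne_zero _)]

lemma sum_weylCoeff_smul_Amonomial (hq2 : ∀ i j, q i j * q j i = 1) {n : ℕ}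
    (Γ Γ' : Fin n → Yp d) (hZ : Zfun q (fun k => (Γ k).1) ≠ 0)
    (hZ' : Zfun q (fun k => (Γ' k).1) ≠ 0) :
    ∑ σ, weylCoeff q (fun k => (Γ k).1) σ • Amonomial q (fun k => Γ (σ k)) Γ'
      = ∑ σ, weylCoeff q (fun k => (Γ' k).1) σ • Amonomial q Γ (fun k => Γ' (σ k)) := by
  have hR : ∑ σ, weylCoeff q (fun k => (Γ k).1) σ • Amonomial q (fun k => Γ (σ k)) Γ'
      = (Zfun q (fun k => (Γ k).1))⁻¹ • Rfun q Γ Γ' := by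
    simp only [Rfun, Finset.smul_sum, smul_smul, weylCoeff, div_eq_inv_mul]
    rfl
  have hL : ∑ σ, weylCoeff q (fun k => (Γ' k).1) σ • Amonomial q Γ (fun k => Γ' (σ k))
      = (Zfun q (fun k => (Γ' k).1))⁻¹ • Lfun q Γ Γ' := by
    simp only [Lfun, Finset.smul_sum, smul_smul, weylCoeff, div_eq_inv_mul]
    rfl
  rw [hR, hL, inv_smul_eq_iff₀ hZ, smul_comm, eq_inv_smul_iff₀ hZ', Zfun_smul_Rfun q hq2]

end WeylCoefficients

lemma coequivariance_of_exchange {R F V W T : Type*} [CommSemiring R] [Fintype F]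
    [AddCommMonoid V] [Module R V] [AddCommMonoid W] [Module R W] [AddCommMonoid T] [Module R T]
    {n : ℕ} (C : (Fin n → F) → Equiv.Perm (Fin n) → R)
    (hC : ∀ Δ σ, C (fun k => Δ (σ k)) σ⁻¹ = C Δ σ) (m : (Fin n → F) → (Fin n → F) → V)
    (h : (Fin n → F) → W) (B : V →ₗ[R] W →ₗ[R] T) (Γ : Fin n → F)
    (hm : ∀ Δ, ∑ σ, C Γ σ • m (fun k => Γ (σ k)) Δ = ∑ σ, C Δ σ • m Γ (fun k => Δ (σ k))) :
    ∑ Γ', ∑ σ, C Γ' σ • B (m Γ Γ') (h fun k => Γ' (σ k))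
      = ∑ Γ', ∑ σ, C Γ σ • B (m (fun k => Γ (σ k)) Γ') (h Γ') := by
  rw [Fintype.sum_sum_comp_perm]
  refine Finset.sum_congr rfl fun Δ _ => ?_
  simp only [hC, Equiv.Perm.coe_inv, Equiv.apply_symm_apply]
  calc ∑ σ, C Δ σ • B (m Γ fun k => Δ (σ k)) (h Δ)
      = B (∑ σ, C Δ σ • m Γ fun k => Δ (σ k)) (h Δ) := by
        simp only [map_sum, map_smul, LinearMap.sum_apply, LinearMap.smul_apply]
    _ = B (∑ σ, C Γ σ • m (fun k => Γ (σ k)) Δ) (h Δ) := by rw [hm]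
    _ = ∑ σ, C Γ σ • B (m (fun k => Γ (σ k)) Δ) (h Δ) := by
        simp only [map_sum, map_smul, LinearMap.sum_apply, LinearMap.smul_apply]

theorem statement15_general (d : ℕ) (K : Type*) [Field K]
    (q : Fin (2 * d) → Fin (2 * d) → Kˣ)
    (hq2 : ∀ i j, q i j * q j i = 1)
    (hZ : ∀ (n : ℕ) (Γ : Fin n → M d), Zfun (K := K) q Γ ≠ 0)
    (N : ℕ) (n : ℕ) (Γ : Fin n → YpN d N) :
    (∑ᶠ Γ' : Fin n → YpN d N, ∑ σ : Equiv.Perm (Fin n),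
        (((qPerm q (fun i => (Γ' i).1) σ : Kˣ) : K) /
            Zfun (K := K) q (fun i => (Γ' i).1)) •
          ((List.ofFn fun i =>
              Amat (K := K) q ⟨(Γ i).1, (Γ i).2.1⟩ ⟨(Γ' i).1, (Γ' i).2.1⟩).prod
            ⊗ₜ[K] (List.ofFn fun i => hbarN (K := K) q N (Γ' (σ i)).1).prod) =
      ∑ᶠ Γ' : Fin n → YpN d N, ∑ σ : Equiv.Perm (Fin n),
        (((qPerm q (fun i => (Γ i).1) σ : Kˣ) : K) /
            Zfun (K := K) q (fun i => (Γ i).1)) •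
          ((List.ofFn fun i =>
              Amat (K := K) q ⟨(Γ (σ i)).1, (Γ (σ i)).2.1⟩ ⟨(Γ' i).1, (Γ' i).2.1⟩).prod
            ⊗ₜ[K] (List.ofFn fun i => hbarN (K := K) q N (Γ' i).1).prod)) ∧
    (∑ᶠ Γ' : Fin n → YpN d N, ∑ σ : Equiv.Perm (Fin n),
        (((qPerm q (fun i => (Γ' i).1) σ : Kˣ) : K) /
            Zfun (K := K) q (fun i => (Γ' i).1)) •
          ((List.ofFn fun i => hbarN (K := K) q N (Γ' (σ i)).1).prod
            ⊗ₜ[K] (List.ofFn fun i =>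
              Amat (K := K) q ⟨(Γ' i).1, (Γ' i).2.1⟩ ⟨(Γ i).1, (Γ i).2.1⟩).prod) =
      ∑ᶠ Γ' : Fin n → YpN d N, ∑ σ : Equiv.Perm (Fin n),
        (((qPerm q (fun i => (Γ i).1) σ : Kˣ) : K) /
            Zfun (K := K) q (fun i => (Γ i).1)) •
          ((List.ofFn fun i => hbarN (K := K) q N (Γ' i).1).prod
            ⊗ₜ[K] (List.ofFn fun i =>
              Amat (K := K) q ⟨(Γ' i).1, (Γ' i).2.1⟩ ⟨(Γ (σ i)).1, (Γ (σ i)).2.1⟩).prod)) := by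
  have : Fintype (YpN d N) := Fintype.ofFinite _
  have hC := fun (Δ : Fin n → YpN d N) σ => weylCoeff_comp_inv q hq2 (fun k => (Δ k).1) σ
  have hexchange := fun Γ Γ' : Fin n → YpN d N => sum_weylCoeff_smul_Amonomial q hq2
    (YpN.toYp ∘ Γ) (YpN.toYp ∘ Γ') (hZ n _) (hZ n _)
  simp only [finsum_eq_sum_of_fintype]
  exact ⟨coequivariance_of_exchange _ hC (fun Γ Γ' => Amonomial q (YpN.toYp ∘ Γ) (YpN.toYp ∘ Γ'))
      (fun Δ => (List.ofFn fun i => hbarN q N (Δ i).1).prod) (TensorProduct.mk K _ _) Γ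
      (hexchange Γ),
    coequivariance_of_exchange _ hC (fun Γ Γ' => Amonomial q (YpN.toYp ∘ Γ') (YpN.toYp ∘ Γ))
      (fun Δ => (List.ofFn fun i => hbarN q N (Δ i).1).prod) (TensorProduct.mk K _ _).flip Γ
      fun Δ => (hexchange Δ Γ).symm⟩

/-- the q-Weyl coefficients `C_{Γ̃}(σ) = q(Γ̃,σ)/Z_n(Γ̃)` satisfy the left and
right affine coequivariance conditions in `𝕄 ⊗ E_{≤N}` and `E_{≤N} ⊗ 𝕄` respectively. -/
theorem statement15 (d : ℕ) (hd : 1 ≤ d) (K : Type*) [Field K]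
    (q : Fin (2 * d) → Fin (2 * d) → Kˣ)
    (hq1 : ∀ i, q i i = 1) (hq2 : ∀ i j, q i j * q j i = 1)
    (hZ : ∀ (n : ℕ) (Γ : Fin n → M d), Zfun (K := K) q Γ ≠ 0)
    (N : ℕ) (hN : 1 ≤ N) (n : ℕ) (hn : 1 ≤ n) (Γ : Fin n → YpN d N) :
    (∑ᶠ Γ' : Fin n → YpN d N, ∑ σ : Equiv.Perm (Fin n),
        (((qPerm q (fun i => (Γ' i).1) σ : Kˣ) : K) /
            Zfun (K := K) q (fun i => (Γ' i).1)) •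
          ((List.ofFn fun i =>
              Amat (K := K) q ⟨(Γ i).1, (Γ i).2.1⟩ ⟨(Γ' i).1, (Γ' i).2.1⟩).prod
            ⊗ₜ[K] (List.ofFn fun i => hbarN (K := K) q N (Γ' (σ i)).1).prod) =
      ∑ᶠ Γ' : Fin n → YpN d N, ∑ σ : Equiv.Perm (Fin n),
        (((qPerm q (fun i => (Γ i).1) σ : Kˣ) : K) /
            Zfun (K := K) q (fun i => (Γ i).1)) •
          ((List.ofFn fun i =>
              Amat (K := K) q ⟨(Γ (σ i)).1, (Γ (σ i)).2.1⟩ ⟨(Γ' i).1, (Γ' i).2.1⟩).prod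
            ⊗ₜ[K] (List.ofFn fun i => hbarN (K := K) q N (Γ' i).1).prod)) ∧
    (∑ᶠ Γ' : Fin n → YpN d N, ∑ σ : Equiv.Perm (Fin n),
        (((qPerm q (fun i => (Γ' i).1) σ : Kˣ) : K) /
            Zfun (K := K) q (fun i => (Γ' i).1)) •
          ((List.ofFn fun i => hbarN (K := K) q N (Γ' (σ i)).1).prod
            ⊗ₜ[K] (List.ofFn fun i =>
              Amat (K := K) q ⟨(Γ' i).1, (Γ' i).2.1⟩ ⟨(Γ i).1, (Γ i).2.1⟩).prod) =
      ∑ᶠ Γ' : Fin n → YpN d N, ∑ σ : Equiv.Perm (Fin n),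
        (((qPerm q (fun i => (Γ i).1) σ : Kˣ) : K) /
            Zfun (K := K) q (fun i => (Γ i).1)) •
          ((List.ofFn fun i => hbarN (K := K) q N (Γ' i).1).prod
            ⊗ₜ[K] (List.ofFn fun i =>
              Amat (K := K) q ⟨(Γ' i).1, (Γ' i).2.1⟩ ⟨(Γ (σ i)).1, (Γ (σ i)).2.1⟩).prod)) :=
  statement15_general d K q hq2 hZ N n Γ
end NC
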